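/- For arbitrary graphs G and H, ρ_e^o(G)·α(H) ≤ ρ_e^o(G ∘ H) ≤ ρ_e^o(G)·α(H) + ρ_e^o(H)·(α(G) − ρ_e^o(G)). -/

import Mathlib

open SimpleGraph

/-- An edge open packing (EOP) set: a set `B` of edges of `G` such that no edge of `G`
(other than the two edges themselves) joins an endvertex of one edge of `B` to an
endvertex of another edge of `B`. -/
def IsEOPSet {V : Type*} (G : SimpleGraph V) (B : Set (Sym2 V)) : Prop :=
  B ⊆ G.edgeSet ∧ ∀ e₁ ∈ B, ∀ e₂ ∈ B, e₁ ≠ e₂ →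
    ∀ x ∈ e₁, ∀ y ∈ e₂, G.Adj x y → s(x, y) = e₁ ∨ s(x, y) = e₂

/-- An induced matching: a set `M` of edges of `G` such that no edge of `G` joins an
endvertex of one edge of `M` to an endvertex of another edge of `M` (this in particular
forces `M` to be a matching). -/
def IsInducedMatching {V : Type*} (G : SimpleGraph V) (M : Set (Sym2 V)) : Prop :=
  M ⊆ G.edgeSet ∧ ∀ e₁ ∈ M, ∀ e₂ ∈ M, e₁ ≠ e₂ →
    ∀ x ∈ e₁, ∀ y ∈ e₂, ¬ G.Adj x y

/-- The edge open packing number `ρₑᵒ(G)`. -/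
noncomputable def eopNum {V : Type*} (G : SimpleGraph V) : ℕ :=
  sSup {n | ∃ B : Finset (Sym2 V), IsEOPSet G ↑B ∧ B.card = n}

/-- The induced matching number `ν_I(G)`. -/
noncomputable def inducedMatchingNum {V : Type*} (G : SimpleGraph V) : ℕ :=
  sSup {n | ∃ M : Finset (Sym2 V), IsInducedMatching G ↑M ∧ M.card = n}

/-- The independence number `α(G)`. -/
noncomputable def indepNum {V : Type*} (G : SimpleGraph V) : ℕ :=
  sSup {n | ∃ S : Finset V, (∀ x ∈ S, ∀ y ∈ S, ¬ G.Adj x y) ∧ S.card = n}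

/-- The open packing number `ρᵒ(G)`: maximum size of a set of vertices whose open
neighborhoods are pairwise disjoint. -/
noncomputable def openPackNum {V : Type*} (G : SimpleGraph V) : ℕ :=
  sSup {n | ∃ P : Finset V,
    (∀ x ∈ P, ∀ y ∈ P, x ≠ y → ∀ z, ¬ (G.Adj x z ∧ G.Adj y z)) ∧ P.card = n}

/-- The 2-packing number `ρ₂(G)`: maximum size of a set of vertices pairwise at
distance greater than 2. -/
noncomputable def twoPackNum {V : Type*} (G : SimpleGraph V) : ℕ :=
  sSup {n | ∃ P : Finset V,
    (∀ x ∈ P, ∀ y ∈ P, x ≠ y →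
      ¬ G.Adj x y ∧ (∀ z, ¬ (G.Adj x z ∧ G.Adj z y))) ∧ P.card = n}

/-- The 3-packing number `ρ₃(G)`: maximum size of a set of vertices pairwise at
distance greater than 3. -/
noncomputable def threePackNum {V : Type*} (G : SimpleGraph V) : ℕ :=
  sSup {n | ∃ P : Finset V,
    (∀ x ∈ P, ∀ y ∈ P, x ≠ y →
      ¬ G.Adj x y ∧ (∀ z, ¬ (G.Adj x z ∧ G.Adj z y)) ∧
      (∀ z w, ¬ (G.Adj x z ∧ G.Adj z w ∧ G.Adj w y))) ∧ P.card = n}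

/-- Minimum degree of `G` (degrees measured via `Set.ncard` of neighborhoods). -/
noncomputable def minDeg {V : Type*} (G : SimpleGraph V) : ℕ :=
  sInf {d | ∃ v, d = (G.neighborSet v).ncard}

/-- The lexicographic product `G ∘ H`. -/
def lexProd {V W : Type*} (G : SimpleGraph V) (H : SimpleGraph W) :
    SimpleGraph (V × W) where
  Adj x y := G.Adj x.1 y.1 ∨ (x.1 = y.1 ∧ H.Adj x.2 y.2)
  symm := ⟨by
    rintro ⟨g, h⟩ ⟨g', h'⟩ (hgg | ⟨rfl, hh⟩)
    · exact Or.inl hgg.symm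
    · exact Or.inr ⟨rfl, hh.symm⟩⟩
  loopless := ⟨by
    rintro ⟨g, h⟩ (hgg | ⟨-, hh⟩)
    · exact G.loopless.irrefl g hgg
    · exact H.loopless.irrefl h hh⟩

/-- The direct (tensor) product `G × H`. -/
def tensorProd {V W : Type*} (G : SimpleGraph V) (H : SimpleGraph W) :
    SimpleGraph (V × W) where
  Adj x y := G.Adj x.1 y.1 ∧ H.Adj x.2 y.2
  symm := ⟨by rintro ⟨g, h⟩ ⟨g', h'⟩ ⟨h1, h2⟩; exact ⟨h1.symm, h2.symm⟩⟩
  loopless := ⟨by rintro ⟨g, h⟩ ⟨h1, -⟩; exact G.loopless.irrefl g h1⟩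

/-- The strong product `G ⊠ H`. -/
def strongProd {V W : Type*} (G : SimpleGraph V) (H : SimpleGraph W) :
    SimpleGraph (V × W) where
  Adj x y := x ≠ y ∧ (x.1 = y.1 ∨ G.Adj x.1 y.1) ∧ (x.2 = y.2 ∨ H.Adj x.2 y.2)
  symm := ⟨by
    rintro x y ⟨hne, h1, h2⟩
    exact ⟨hne.symm, h1.imp Eq.symm (fun h => h.symm), h2.imp Eq.symm (fun h => h.symm)⟩⟩
  loopless := ⟨by rintro x ⟨hne, -, -⟩; exact hne rfl⟩

/-- The star `K_{1,r}` with center `none` and leaves `some i`. -/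
def starGraph (r : ℕ) : SimpleGraph (Option (Fin r)) :=
  SimpleGraph.fromRel (fun x _ => x = none)

/-- The spider `S^k`: obtained from `K_{1,k}` by subdividing every edge exactly once.
The center is `none`, `some (i, false)` are the support vertices and `some (i, true)`
the leaves. -/
def spiderGraph (k : ℕ) : SimpleGraph (Option (Fin k × Bool)) :=
  SimpleGraph.fromRel (fun x y =>
    (x = none ∧ ∃ i, y = some (i, false)) ∨
    (∃ i, x = some (i, false) ∧ y = some (i, true)))

/-- The `n`-dimensional hypercube `Q_n`: vertices are `Fin n → Bool`, adjacent iff they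
differ in exactly one coordinate. -/
def hypercube (n : ℕ) : SimpleGraph (Fin n → Bool) :=
  SimpleGraph.fromRel (fun x y =>
    (Finset.univ.filter (fun i => x i ≠ y i)).card = 1)

/-- The corona product `G ⊙ H`: vertices `(v, none)` form a copy of `G`, vertices
`(v, some h)` form a copy of `H` for each `v`, and `(v, none)` is joined to every
vertex of its copy of `H`. -/
def corona {V W : Type*} (G : SimpleGraph V) (H : SimpleGraph W) :
    SimpleGraph (V × Option W) :=
  SimpleGraph.fromRel (fun x y =>
    (x.2 = none ∧ y.2 = none ∧ G.Adj x.1 y.1) ∨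
    (x.1 = y.1 ∧ ∃ h h', x.2 = some h ∧ y.2 = some h' ∧ H.Adj h h') ∨
    (x.1 = y.1 ∧ x.2 = none ∧ ∃ h, y.2 = some h))

/-- The set of endvertices of the edges of `B`. -/
def supportSet {V : Type*} (B : Set (Sym2 V)) : Set V := {v | ∃ e ∈ B, v ∈ e}


/-! Lower bound: every edge `e` of an EOP set `B` of `G` has an endpoint `l e` lying on no other
edge of `B`. If `S` is independent in `H` and `c e` is the other endpoint of `e`, the edges joining
`(c e, h₀)` to `(l e, h)` for `h ∈ S` form an EOP set of `G ∘ H` of size `|B|·|S|`.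

Upper bound: an EOP set of `G ∘ H` splits into edges projecting onto edges of `G` and edges inside
a single layer `{g} × W`. The projections of the former form an EOP set `C` of `G`, and at most
`α(H)` of them lie over each edge of `C`; the latter form an EOP set of `H` in each layer. The
vertices `g` whose layer carries such edges, together with private endpoints of `C`, are
independent in `G`, so there are at most `α(G) - |C|` of them. -/

section

variable {α : Type*} [Fintype α] {P : Finset α → Prop}

lemma bddAbove_setOf_card : BddAbove {n | ∃ t : Finset α, P t ∧ t.card = n} := by
  refine ⟨Fintype.card α, ?_⟩
  rintro _ ⟨t, -, rfl⟩
  exact t.card_le_univ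

lemma card_le_sSup_card {s : Finset α} (hs : P s) :
    s.card ≤ sSup {n | ∃ t, P t ∧ t.card = n} :=
  le_csSup bddAbove_setOf_card ⟨s, hs, rfl⟩

lemma exists_card_eq_sSup_card (h : P ∅) :
    ∃ s, P s ∧ s.card = sSup {n | ∃ t, P t ∧ t.card = n} :=
  Nat.sSup_mem (s := {n | ∃ t, P t ∧ t.card = n}) ⟨0, ∅, h, rfl⟩ bddAbove_setOf_card

end

section

variable {V : Type*} [Fintype V] {G : SimpleGraph V}

lemma IsEOPSet.card_le_eopNum {B : Finset (Sym2 V)} (hB : IsEOPSet G B) :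
    B.card ≤ eopNum G :=
  card_le_sSup_card (P := fun B : Finset (Sym2 V) => IsEOPSet G B) hB

variable (G) in
lemma exists_isEOPSet_card_eq_eopNum :
    ∃ B : Finset (Sym2 V), IsEOPSet G B ∧ B.card = eopNum G :=
  exists_card_eq_sSup_card (P := fun B : Finset (Sym2 V) => IsEOPSet G B) (by simp [IsEOPSet])

lemma card_le_indepNum {S : Finset V} (hS : ∀ x ∈ S, ∀ y ∈ S, ¬ G.Adj x y) :
    S.card ≤ _root_.indepNum G :=
  card_le_sSup_card (P := fun S : Finset V => ∀ x ∈ S, ∀ y ∈ S, ¬ G.Adj x y) hS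

variable (G) in
lemma exists_card_eq_indepNum :
    ∃ S : Finset V, (∀ x ∈ S, ∀ y ∈ S, ¬ G.Adj x y) ∧ S.card = _root_.indepNum G :=
  exists_card_eq_sSup_card (P := fun S : Finset V => ∀ x ∈ S, ∀ y ∈ S, ¬ G.Adj x y) (by simp)

end

namespace IsEOPSet

variable {V V' : Type*} {G : SimpleGraph V} {G' : SimpleGraph V'} {B : Set (Sym2 V)}

lemma mono {B' : Set (Sym2 V)} (hB : IsEOPSet G B) (h : B' ⊆ B) : IsEOPSet G B' :=
  ⟨h.trans hB.1, fun e₁ he₁ e₂ he₂ => hB.2 e₁ (h he₁) e₂ (h he₂)⟩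

lemma eq_or_eq (hB : IsEOPSet G B) {e₁ e₂ : Sym2 V} (he₁ : e₁ ∈ B) (he₂ : e₂ ∈ B) {x y : V}
    (hx : x ∈ e₁) (hy : y ∈ e₂) (hxy : G.Adj x y) : s(x, y) = e₁ ∨ s(x, y) = e₂ := by
  by_cases h : e₁ = e₂
  · subst h
    exact Or.inl ((Sym2.mem_and_mem_iff hxy.ne).mp ⟨hx, hy⟩).symm
  · exact hB.2 e₁ he₁ e₂ he₂ h x hx y hy hxy

lemma exists_private_mem (hB : IsEOPSet G B) {e : Sym2 V} (he : e ∈ B) :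
    ∃ v ∈ e, ∀ f ∈ B, f ≠ e → v ∉ f := by
  induction e using Sym2.ind with | _ a b => ?_
  by_contra! h
  obtain ⟨f, hf, hfe, haf⟩ := h a (Sym2.mem_mk_left a b)
  obtain ⟨f', hf', hf'e, hbf'⟩ := h b (Sym2.mem_mk_right a b)
  rcases hB.eq_or_eq hf hf' haf hbf' (hB.1 he) with h | h
  · exact hfe h.symm
  · exact hf'e h.symm

lemma exists_private_endpoints (hB : IsEOPSet G B) :
    ∃ l c : Sym2 V → V, (∀ e ∈ B, e = s(l e, c e)) ∧ ∀ e ∈ B, ∀ f ∈ B, f ≠ e → l e ∉ f := by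
  have h : ∀ e, ∃ v w : V, e ∈ B → e = s(v, w) ∧ ∀ f ∈ B, f ≠ e → v ∉ f := fun e => by
    by_cases he : e ∈ B
    · obtain ⟨v, hv, hpriv⟩ := hB.exists_private_mem he
      exact ⟨v, Sym2.Mem.other hv, fun _ => ⟨(Sym2.other_spec hv).symm, hpriv⟩⟩
    · exact ⟨e.out.1, e.out.1, fun h => absurd h he⟩
  choose l c hlc using h
  exact ⟨l, c, fun e he => (hlc e he).1, fun e he => (hlc e he).2⟩

/-- The witness is the set of private endpoints of the edges of `B`. -/
lemma exists_indep_card_eq [Fintype V] {B : Finset (Sym2 V)} (hB : IsEOPSet G B) :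
    ∃ S : Finset V, (∀ x ∈ S, ∀ y ∈ S, ¬ G.Adj x y) ∧ S.card = B.card ∧
      ∀ v ∈ S, ∃ e ∈ B, v ∈ e := by
  classical
  obtain ⟨l, c, hlc, hpriv⟩ := hB.exists_private_endpoints
  have hl : ∀ e ∈ B, l e ∈ e := fun e he => by
    have := Sym2.mem_mk_left (l e) (c e)
    rwa [← hlc e he] at this
  have hinj : Set.InjOn l B := fun e he e' he' h => by
    by_contra hne
    exact hpriv e' he' e he hne (h ▸ hl e he)
  refine ⟨B.image l, ?_, Finset.card_image_of_injOn hinj, ?_⟩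
  · simp only [Finset.mem_image]
    rintro _ ⟨e, he, rfl⟩ _ ⟨e', he', rfl⟩ hadj
    have hne : e ≠ e' := by rintro rfl; exact hadj.ne rfl
    rcases hB.eq_or_eq he he' (hl e he) (hl e' he') hadj with h | h
    · exact hpriv e' he' e he hne (h ▸ Sym2.mem_mk_right _ _)
    · exact hpriv e he e' he' hne.symm (h ▸ Sym2.mem_mk_left _ _)
  · simp only [Finset.mem_image]
    rintro _ ⟨e, he, rfl⟩
    exact ⟨e, he, hl e he⟩

lemma map (f : G ↪g G') (hB : IsEOPSet G B) : IsEOPSet G' (Sym2.map f '' B) := by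
  refine ⟨?_, ?_⟩
  · rintro _ ⟨e, he, rfl⟩
    exact f.map_mem_edgeSet_iff.mpr (hB.1 he)
  rintro _ ⟨e₁, he₁, rfl⟩ _ ⟨e₂, he₂, rfl⟩ - _ hx _ hy hadj
  obtain ⟨x, hx', rfl⟩ := Sym2.mem_map.mp hx
  obtain ⟨y, hy', rfl⟩ := Sym2.mem_map.mp hy
  rcases hB.eq_or_eq he₁ he₂ hx' hy' (f.map_adj_iff.mp hadj) with h | h <;> simp [← h]

lemma comap (f : G ↪g G') {B' : Set (Sym2 V')} (hB : IsEOPSet G' B') :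
    IsEOPSet G (Sym2.map f ⁻¹' B') := by
  refine ⟨fun e he => f.map_mem_edgeSet_iff.mp (hB.1 he), ?_⟩
  rintro e₁ he₁ e₂ he₂ - x hx y hy hadj
  have hinj := Sym2.map.injective f.injective
  rcases hB.eq_or_eq he₁ he₂ (Sym2.mem_map.mpr ⟨x, hx, rfl⟩) (Sym2.mem_map.mpr ⟨y, hy, rfl⟩)
    (f.map_adj_iff.mpr hadj) with h | h
  · exact Or.inl (hinj h)
  · exact Or.inr (hinj h)

end IsEOPSet

section

variable {V V' : Type*} [Fintype V] [Fintype V']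

lemma eopNum_le_indepNum (G : SimpleGraph V) : eopNum G ≤ _root_.indepNum G := by
  obtain ⟨B, hB, hBcard⟩ := exists_isEOPSet_card_eq_eopNum G
  obtain ⟨S, hS, hScard, -⟩ := hB.exists_indep_card_eq
  exact hBcard ▸ hScard ▸ card_le_indepNum hS

lemma eopNum_le_of_embedding {G : SimpleGraph V} {G' : SimpleGraph V'} (f : G ↪g G') :
    eopNum G ≤ eopNum G' := by
  classical
  obtain ⟨B, hB, hBcard⟩ := exists_isEOPSet_card_eq_eopNum G
  rw [← hBcard, ← Finset.card_image_of_injective B (Sym2.map.injective f.injective)]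
  exact IsEOPSet.card_le_eopNum (by simpa using hB.map f)

end

section LexProd

variable {V W : Type*} {G : SimpleGraph V} {H : SimpleGraph W}

@[simp]
lemma lexProd_adj {x y : V × W} :
    (lexProd G H).Adj x y ↔ G.Adj x.1 y.1 ∨ (x.1 = y.1 ∧ H.Adj x.2 y.2) :=
  Iff.rfl

variable (G H) in
def lexProdLayer (g : V) : H ↪g lexProd G H where
  toFun w := (g, w)
  inj' _ _ h := congrArg Prod.snd h
  map_rel_iff' {a b} := by
    change G.Adj g g ∨ (g = g ∧ H.Adj a b) ↔ H.Adj a b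
    simp

variable (G) in
def lexProdBotEmbedding {S : Finset W} (hS : ∀ x ∈ S, ∀ y ∈ S, ¬ H.Adj x y) :
    lexProd G (⊥ : SimpleGraph S) ↪g lexProd G H where
  toFun x := (x.1, x.2)
  inj' x y h := by
    simp only [Prod.mk.injEq] at h
    exact Prod.ext h.1 (Subtype.ext h.2)
  map_rel_iff' {x y} := by
    change G.Adj x.1 y.1 ∨ (x.1 = y.1 ∧ H.Adj x.2 y.2) ↔ G.Adj x.1 y.1 ∨ (x.1 = y.1 ∧ False)
    simp [hS _ x.2.2 _ y.2.2]

end LexProd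

section LowerBound

variable {V W T : Type*} {G : SimpleGraph V}

lemma IsEOPSet.lexProd_bot {B : Set (Sym2 V)} (hB : IsEOPSet G B) {l c : Sym2 V → V}
    (hlc : ∀ e ∈ B, e = s(l e, c e)) (hpriv : ∀ e ∈ B, ∀ f ∈ B, f ≠ e → l e ∉ f) (t₀ : T) :
    IsEOPSet (lexProd G (⊥ : SimpleGraph T))
      (Set.image2 (fun e t => s((l e, t), (c e, t₀))) B Set.univ) := by
  have hadj : ∀ e ∈ B, G.Adj (l e) (c e) := fun e he => by
    have := hB.1 he
    rwa [hlc e he] at this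
  have hmem : ∀ e ∈ B, ∀ t, ∀ x ∈ s((l e, t), (c e, t₀)), x.1 ∈ e := fun e he t x hx => by
    rw [hlc e he]
    rcases Sym2.mem_iff.mp hx with rfl | rfl <;> simp
  have key : ∀ e ∈ B, ∀ e' ∈ B, e ≠ e' → ∀ t t', ∀ x ∈ s((l e, t), (c e, t₀)),
      ∀ y ∈ s((l e', t'), (c e', t₀)), s(x.1, y.1) = e →
        s(x, y) = s((l e, t), (c e, t₀)) := by
    intro e he e' he' hne t t' x hx y hy hxy
    -- `y.1` lies on both `e` and `e'`, so it is the common non-private endpoint `c e = c e'`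
    have hye : y.1 ∈ e := hxy ▸ Sym2.mem_mk_right _ _
    have hy1 : y.1 ≠ l e' := fun h => hpriv e' he' e he hne (h ▸ hye)
    have hy2 : y.1 ≠ l e := fun h => hpriv e he e' he' hne.symm (h ▸ hmem e' he' t' y hy)
    rw [hlc e he] at hye
    simp only [Sym2.mem_iff] at hx hy hye
    rcases hy with rfl | rfl
    · exact absurd rfl hy1
    rcases hx with rfl | rfl <;> grind
  refine ⟨?_, ?_⟩
  · rintro _ ⟨e, he, t, -, rfl⟩
    exact Or.inl (hadj e he)
  rintro _ ⟨e, he, t, -, rfl⟩ _ ⟨e', he', t', -, rfl⟩ hne x hx y hy hxy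
  replace hxy : G.Adj x.1 y.1 := by simpa using hxy
  by_cases hee : e = e'
  · subst hee
    simp only [Sym2.mem_iff] at hx hy
    rcases hx with rfl | rfl <;> rcases hy with rfl | rfl
    all_goals first
      | exact absurd hxy (G.loopless.irrefl _)
      | exact Or.inl rfl
      | exact Or.inr Sym2.eq_swap
  rcases hB.2 e he e' he' hee _ (hmem e he t x hx) _ (hmem e' he' t' y hy) hxy with h | h
  · exact Or.inl (key e he e' he' hee t t' x hx y hy h)
  · exact Or.inr (Sym2.eq_swap.trans (key e' he' e he (Ne.symm hee) t' t y hy x hx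
      (Sym2.eq_swap.trans h)))

variable [Fintype V] [Fintype W]

variable (G) in
lemma eopNum_mul_card_le_eopNum_lexProd_bot [Fintype T] :
    eopNum G * Fintype.card T ≤ eopNum (lexProd G (⊥ : SimpleGraph T)) := by
  classical
  rcases isEmpty_or_nonempty T with hT | ⟨⟨t₀⟩⟩
  · simp
  obtain ⟨B, hB, hBcard⟩ := exists_isEOPSet_card_eq_eopNum G
  obtain ⟨l, c, hlc, hpriv⟩ := hB.exists_private_endpoints
  set E : Sym2 V → T → Sym2 (V × T) := fun e t => s((l e, t), (c e, t₀))
  have hinj : ((B : Set (Sym2 V)) ×ˢ (Finset.univ : Finset T)).InjOn (Function.uncurry E) := by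
    rintro ⟨e, t⟩ ⟨he, -⟩ ⟨e', t'⟩ ⟨he', -⟩ h
    obtain rfl : e = e' := by
      rw [hlc e he, hlc e' he']
      simpa [E] using congrArg (Sym2.map Prod.fst) h
    have hadj : G.Adj (l e) (c e) := by
      have := hB.1 he
      rwa [hlc e he] at this
    simp [E, hadj.ne] at h
    simp [h]
  calc eopNum G * Fintype.card T = (Finset.image₂ E B Finset.univ).card := by
        rw [Finset.card_image₂_iff.mpr hinj, hBcard, Finset.card_univ]
    _ ≤ _ := IsEOPSet.card_le_eopNum (by simpa using hB.lexProd_bot hlc hpriv t₀)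

lemma eopNum_mul_indepNum_le_eopNum_lexProd (G : SimpleGraph V) (H : SimpleGraph W) :
    eopNum G * _root_.indepNum H ≤ eopNum (lexProd G H) := by
  obtain ⟨S, hS, hScard⟩ := exists_card_eq_indepNum H
  calc eopNum G * _root_.indepNum H = eopNum G * Fintype.card S := by simp [hScard]
    _ ≤ eopNum (lexProd G (⊥ : SimpleGraph S)) := eopNum_mul_card_le_eopNum_lexProd_bot G
    _ ≤ eopNum (lexProd G H) := eopNum_le_of_embedding (lexProdBotEmbedding G hS)

end LowerBound

lemma forall_fst_eq_or_forall_snd_eq {α β : Type*} {P : Set (α × β)}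
    (hP : ∀ p ∈ P, ∀ q ∈ P, p.1 = q.1 ∨ p.2 = q.2) :
    (∀ p ∈ P, ∀ q ∈ P, p.1 = q.1) ∨ (∀ p ∈ P, ∀ q ∈ P, p.2 = q.2) := by
  by_contra! h
  obtain ⟨⟨p, hp, q, hq, hpq⟩, r, hr, s, hs, hrs⟩ := h
  have key : ∀ t ∈ P, t.1 = r.1 := fun t ht => by
    have := hP t ht r hr; have := hP t ht s hs; have := hP r hr s hs
    grind
  exact hpq ((key p hp).trans (key q hq).symm)

lemma card_le_indepNum_of_forall_fst_eq_or_snd_eq {W : Type*} [Fintype W] {H : SimpleGraph W}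
    {P : Finset (W × W)} (hP : ∀ p ∈ P, ∀ q ∈ P, p.1 = q.1 ∨ p.2 = q.2)
    (h₁ : ∀ p ∈ P, ∀ q ∈ P, ¬ H.Adj p.1 q.1) (h₂ : ∀ p ∈ P, ∀ q ∈ P, ¬ H.Adj p.2 q.2) :
    P.card ≤ _root_.indepNum H := by
  classical
  rcases forall_fst_eq_or_forall_snd_eq hP with h | h
  · rw [← Finset.card_image_of_injOn fun p hp q hq hpq => Prod.ext (h p hp q hq) hpq]
    apply card_le_indepNum
    simp only [Finset.mem_image]
    rintro _ ⟨p, hp, rfl⟩ _ ⟨q, hq, rfl⟩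
    exact h₂ p hp q hq
  · rw [← Finset.card_image_of_injOn fun p hp q hq hpq => Prod.ext hpq (h p hp q hq)]
    apply card_le_indepNum
    simp only [Finset.mem_image]
    rintro _ ⟨p, hp, rfl⟩ _ ⟨q, hq, rfl⟩
    exact h₁ p hp q hq

section UpperBound

variable {V W : Type*} {G : SimpleGraph V} {H : SimpleGraph W}

lemma map_fst_mem_edgeSet_of_not_isDiag {E : Sym2 (V × W)} (hE : E ∈ (lexProd G H).edgeSet)
    (hd : ¬ (E.map Prod.fst).IsDiag) : E.map Prod.fst ∈ G.edgeSet := by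
  induction E using Sym2.ind with | _ x y => ?_
  simp only [Sym2.map_mk, Sym2.mk_isDiag_iff] at hd
  exact hE.resolve_right fun h => hd h.1

lemma map_lexProdLayer_map_snd {E : Sym2 (V × W)} {g : V} (h : E.map Prod.fst = s(g, g)) :
    (E.map Prod.snd).map (lexProdLayer G H g) = E := by
  induction E using Sym2.ind with | _ x y => ?_
  rcases x with ⟨a, u⟩
  rcases y with ⟨b, w⟩
  obtain ⟨rfl, rfl⟩ : a = g ∧ b = g := by simpa [Sym2.eq_iff] using h
  rfl

lemma exists_eq_of_map_fst_eq {E : Sym2 (V × W)} {g g' : V} (h : E.map Prod.fst = s(g, g')) :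
    ∃ p : W × W, E = s((g, p.1), (g', p.2)) := by
  induction E using Sym2.ind with | _ x y => ?_
  rcases Sym2.eq_iff.mp h with ⟨rfl, rfl⟩ | ⟨rfl, rfl⟩
  · exact ⟨(x.2, y.2), rfl⟩
  · exact ⟨(y.2, x.2), Sym2.eq_swap⟩

namespace IsEOPSet

section

variable {B : Set (Sym2 (V × W))}

lemma image_map_fst (hB : IsEOPSet (lexProd G H) B) :
    IsEOPSet G {e ∈ Sym2.map Prod.fst '' B | ¬ e.IsDiag} := by
  refine ⟨?_, ?_⟩
  · rintro _ ⟨⟨E, hE, rfl⟩, hd⟩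
    exact map_fst_mem_edgeSet_of_not_isDiag (hB.1 hE) hd
  rintro _ ⟨⟨E₁, hE₁, rfl⟩, -⟩ _ ⟨⟨E₂, hE₂, rfl⟩, -⟩ - _ hx _ hy hxy
  obtain ⟨x, hx', rfl⟩ := Sym2.mem_map.mp hx
  obtain ⟨y, hy', rfl⟩ := Sym2.mem_map.mp hy
  rcases hB.eq_or_eq hE₁ hE₂ hx' hy' (Or.inl hxy) with h | h <;> simp [← h]

lemma not_adj_snd_of_fst_eq (hB : IsEOPSet (lexProd G H) B) {E₁ E₂ : Sym2 (V × W)}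
    (hE₁ : E₁ ∈ B) (hE₂ : E₂ ∈ B) (hd₁ : ¬ (E₁.map Prod.fst).IsDiag)
    (hd₂ : ¬ (E₂.map Prod.fst).IsDiag) {x y : V × W} (hx : x ∈ E₁) (hy : y ∈ E₂)
    (hxy : x.1 = y.1) : ¬ H.Adj x.2 y.2 := fun h => by
  rcases hB.eq_or_eq hE₁ hE₂ hx hy (Or.inr ⟨hxy, h⟩) with rfl | rfl <;> simp_all

lemma not_adj_of_map_fst_eq_diag (hB : IsEOPSet (lexProd G H) B) {F E : Sym2 (V × W)} {g : V}
    (hF : F ∈ B) (hFg : F.map Prod.fst = s(g, g)) (hE : E ∈ B) {z : V × W} (hz : z ∈ E) :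
    ¬ G.Adj g z.1 := by
  induction F using Sym2.ind with | _ x y => ?_
  obtain ⟨rfl, hy⟩ : x.1 = g ∧ y.1 = g := by simpa [Sym2.eq_iff] using hFg
  have hxy : H.Adj x.2 y.2 := ((hB.1 hF).resolve_left (by simp [hy])).2
  intro hadj
  have hzF : z ∉ s(x, y) := fun h => by
    rcases Sym2.mem_iff.mp h with rfl | rfl <;> simp_all
  -- both endpoints of the layer edge `xy` are adjacent to `z`, so both lie on `E`
  rcases hB.eq_or_eq hF hE (Sym2.mem_mk_left x y) hz (Or.inl hadj) with hx | hx
  · exact hzF (hx ▸ Sym2.mem_mk_right _ _)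
  rcases hB.eq_or_eq hF hE (Sym2.mem_mk_right x y) hz (Or.inl (hy ▸ hadj)) with hy' | hy'
  · exact hzF (hy' ▸ Sym2.mem_mk_right _ _)
  exact hxy.ne (congrArg Prod.snd (Sym2.congr_left.mp (hx.trans hy'.symm)))

lemma ne_of_map_fst_eq_diag (hB : IsEOPSet (lexProd G H) B) {F E : Sym2 (V × W)} {g : V}
    (hF : F ∈ B) (hFg : F.map Prod.fst = s(g, g)) (hE : E ∈ B)
    (hd : ¬ (E.map Prod.fst).IsDiag) {v : V} (hv : v ∈ E.map Prod.fst) : g ≠ v := by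
  have hadj := map_fst_mem_edgeSet_of_not_isDiag (hB.1 hE) hd
  induction E using Sym2.ind with | _ x y => ?_
  rintro rfl
  rcases Sym2.mem_iff.mp hv with h | h
  · exact hB.not_adj_of_map_fst_eq_diag hF hFg hE (Sym2.mem_mk_right x y) (h ▸ hadj)
  · exact hB.not_adj_of_map_fst_eq_diag hF hFg hE (Sym2.mem_mk_left x y) (h ▸ hadj.symm)

end

variable [DecidableEq V] {B : Finset (Sym2 (V × W))}

lemma card_filter_map_fst_eq_diag_le [Fintype W] (hB : IsEOPSet (lexProd G H) B) (g : V) :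
    (B.filter (fun E : Sym2 (V × W) => E.map Prod.fst = s(g, g))).card ≤ eopNum H := by
  have hinj := Sym2.map.injective (lexProdLayer G H g).injective
  calc _ ≤ (B.preimage _ hinj.injOn).card := by
        refine Finset.card_le_card_of_injOn (Sym2.map Prod.snd) (fun E hE => ?_) ?_
        · rw [Finset.mem_coe, Finset.mem_filter] at hE
          simpa [map_lexProdLayer_map_snd hE.2] using hE.1
        · intro E₁ hE₁ E₂ hE₂ h
          rw [Finset.coe_filter] at hE₁ hE₂
          rw [← map_lexProdLayer_map_snd (G := G) (H := H) hE₁.2,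
            ← map_lexProdLayer_map_snd (G := G) (H := H) hE₂.2, h]
    _ ≤ eopNum H := IsEOPSet.card_le_eopNum (by simpa using hB.comap (lexProdLayer G H g))

/-- Two edges of `B` over the edge `gg'` of `G` share their vertex in `{g} × W` or their vertex
in `{g'} × W`, so one of these two vertices is the same for all of them. -/
lemma card_filter_map_fst_eq_le_indepNum [Fintype W] (hB : IsEOPSet (lexProd G H) B)
    {g g' : V} (hgg' : G.Adj g g') :
    (B.filter (fun E : Sym2 (V × W) => E.map Prod.fst = s(g, g'))).card ≤
      _root_.indepNum H := by
  classical
  set f : W × W → Sym2 (V × W) := fun p => s((g, p.1), (g', p.2))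
  have hf : f.Injective := fun p q h => by
    simpa [f, Sym2.eq_iff, hgg'.ne, Prod.ext_iff] using h
  have hd : ∀ p, ¬ ((f p).map Prod.fst).IsDiag := by simp [f, hgg'.ne]
  set P := B.preimage f hf.injOn
  have hP : ∀ p ∈ P, f p ∈ (B : Set (Sym2 (V × W))) := fun p hp => Finset.mem_preimage.mp hp
  calc _ ≤ (P.image f).card := by
        refine Finset.card_le_card fun E hE => ?_
        rw [Finset.mem_filter] at hE
        obtain ⟨p, rfl⟩ := exists_eq_of_map_fst_eq hE.2
        exact Finset.mem_image_of_mem f (Finset.mem_preimage.mpr hE.1)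
    _ ≤ P.card := Finset.card_image_le
    _ ≤ _ := by
        refine card_le_indepNum_of_forall_fst_eq_or_snd_eq (fun p hp q hq => ?_)
          (fun p hp q hq => hB.not_adj_snd_of_fst_eq (hP p hp) (hP q hq) (hd p) (hd q)
            (Sym2.mem_mk_left _ _) (Sym2.mem_mk_left _ _) rfl)
          (fun p hp q hq => hB.not_adj_snd_of_fst_eq (hP p hp) (hP q hq) (hd p) (hd q)
            (Sym2.mem_mk_right _ _) (Sym2.mem_mk_right _ _) rfl)
        rcases hB.eq_or_eq (hP p hp) (hP q hq) (Sym2.mem_mk_left _ _) (Sym2.mem_mk_right _ _)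
          (Or.inl hgg') with h | h
        · simp [f, hgg'.ne] at h
          exact Or.inr h.symm
        · simp [f, hgg'.ne] at h
          exact Or.inl h

lemma card_le_mul_indepNum_add_mul_eopNum [Fintype W] (hB : IsEOPSet (lexProd G H) B) :
    B.card ≤
      ((B.image (Sym2.map Prod.fst)).filter (fun e => ¬ e.IsDiag)).card * _root_.indepNum H +
        ((B.image (Sym2.map Prod.fst)).filter (fun e => e.IsDiag)).card * eopNum H := by
  rw [Finset.card_eq_sum_card_image (Sym2.map Prod.fst) B,
    ← Finset.sum_filter_not_add_sum_filter _ (fun e => e.IsDiag)]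
  refine add_le_add
    ((Finset.sum_le_card_nsmul _ _ (_root_.indepNum H) fun e he => ?_).trans (smul_eq_mul _ _).le)
    ((Finset.sum_le_card_nsmul _ _ (eopNum H) fun e he => ?_).trans (smul_eq_mul _ _).le)
  all_goals
    induction e using Sym2.ind with | _ g g' => ?_
    simp only [Finset.mem_filter, Finset.mem_image, Sym2.mk_isDiag_iff] at he
    obtain ⟨⟨E, hE, hEg⟩, hd⟩ := he
  · have := map_fst_mem_edgeSet_of_not_isDiag (hB.1 hE) (by simpa [hEg] using hd)
    rw [hEg] at this
    exact hB.card_filter_map_fst_eq_le_indepNum this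
  · subst hd
    exact hB.card_filter_map_fst_eq_diag_le g

/-- The witness is the set of vertices `g` whose layer `{g} × W` contains an edge of `B`,
together with private endpoints of the projection of `B` to `G`. -/
lemma card_add_card_le_indepNum_lexProd [Fintype V] (hB : IsEOPSet (lexProd G H) B) :
    ((B.image (Sym2.map Prod.fst)).filter (fun e => e.IsDiag)).card +
      ((B.image (Sym2.map Prod.fst)).filter (fun e => ¬ e.IsDiag)).card ≤
        _root_.indepNum G := by
  set K := B.image (Sym2.map Prod.fst)
  set D := Finset.univ.filter (fun g => s(g, g) ∈ K)
  have hC : IsEOPSet G (K.filter (fun e => ¬ e.IsDiag)) :=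
    hB.image_map_fst.mono fun e he => by simpa [K] using he
  obtain ⟨S, hS, hScard, hSC⟩ := hC.exists_indep_card_eq
  have hKD : K.filter (fun e => e.IsDiag) ⊆ D.image Sym2.diag := by
    intro e he
    induction e using Sym2.ind with | _ g g' => ?_
    simp only [Finset.mem_filter, Sym2.mk_isDiag_iff] at he
    obtain ⟨he, rfl⟩ := he
    exact Finset.mem_image_of_mem _ (by simpa [D] using he)
  have hD : ∀ g ∈ D, ∃ F ∈ B, F.map Prod.fst = s(g, g) := by simp [D, K]
  have hS' : ∀ v ∈ S, ∃ E ∈ B, ¬ (E.map Prod.fst).IsDiag ∧ v ∈ E.map Prod.fst := by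
    intro v hv
    obtain ⟨e, he, hve⟩ := hSC v hv
    simp only [Finset.mem_filter, K, Finset.mem_image] at he
    obtain ⟨⟨E, hE, rfl⟩, hd⟩ := he
    exact ⟨E, hE, hd, hve⟩
  have hvert : ∀ v ∈ D ∪ S, ∃ E ∈ B, ∃ z ∈ E, z.1 = v := by
    intro v hv
    rcases Finset.mem_union.mp hv with hv | hv
    · obtain ⟨F, hF, hFv⟩ := hD v hv
      obtain ⟨z, hz, hzv⟩ := Sym2.mem_map.mp (hFv ▸ Sym2.mem_mk_left v v)
      exact ⟨F, hF, z, hz, hzv⟩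
    · obtain ⟨E, hE, -, hvE⟩ := hS' v hv
      obtain ⟨z, hz, hzv⟩ := Sym2.mem_map.mp hvE
      exact ⟨E, hE, z, hz, hzv⟩
  have hDadj : ∀ g ∈ D, ∀ v ∈ D ∪ S, ¬ G.Adj g v := by
    intro g hg v hv
    obtain ⟨F, hF, hFg⟩ := hD g hg
    obtain ⟨E, hE, z, hz, rfl⟩ := hvert v hv
    exact hB.not_adj_of_map_fst_eq_diag hF hFg hE hz
  have hdisj : Disjoint D S := Finset.disjoint_left.mpr fun g hgD hgS => by
    obtain ⟨F, hF, hFg⟩ := hD g hgD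
    obtain ⟨E, hE, hd, hgE⟩ := hS' g hgS
    exact hB.ne_of_map_fst_eq_diag hF hFg hE hd hgE rfl
  calc _ ≤ D.card + S.card := by
        have := (Finset.card_le_card hKD).trans Finset.card_image_le
        omega
    _ = (D ∪ S).card := (Finset.card_union_of_disjoint hdisj).symm
    _ ≤ _ := by
        refine card_le_indepNum fun x hx y hy hxy => ?_
        rcases Finset.mem_union.mp hx with hx' | hx'
        · exact hDadj x hx' y hy hxy
        rcases Finset.mem_union.mp hy with hy' | hy'
        · exact hDadj y hy' x hx hxy.symm
        · exact hS x hx' y hy' hxy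

end IsEOPSet

end UpperBound

lemma mul_add_mul_le_mul_add_mul_tsub {c d ρ α ρ' α' : ℕ} (hc : c ≤ ρ) (hdc : d + c ≤ α)
    (hρ' : ρ' ≤ α') : c * α' + d * ρ' ≤ ρ * α' + ρ' * (α - ρ) := by
  rcases le_total ρ α with h | h
  · obtain ⟨k, rfl⟩ := Nat.exists_eq_add_of_le h
    obtain ⟨m, rfl⟩ := Nat.exists_eq_add_of_le hc
    rw [Nat.add_sub_cancel_left]
    nlinarith
  · rw [Nat.sub_eq_zero_of_le h]
    nlinarith

lemma eopNum_lexProd_le {V W : Type*} [Fintype V] [Fintype W] (G : SimpleGraph V)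
    (H : SimpleGraph W) :
    eopNum (lexProd G H) ≤
      eopNum G * _root_.indepNum H + eopNum H * (_root_.indepNum G - eopNum G) := by
  classical
  obtain ⟨B, hB, hBcard⟩ := exists_isEOPSet_card_eq_eopNum (lexProd G H)
  have hC : IsEOPSet G ((B.image (Sym2.map Prod.fst)).filter (fun e => ¬ e.IsDiag)) :=
    hB.image_map_fst.mono fun e he => by simpa using he
  rw [← hBcard]
  exact hB.card_le_mul_indepNum_add_mul_eopNum.trans
    (mul_add_mul_le_mul_add_mul_tsub hC.card_le_eopNum hB.card_add_card_le_indepNum_lexProd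
      (eopNum_le_indepNum H))

/-- For arbitrary graphs `G` and `H`,
`ρₑᵒ(G)·α(H) ≤ ρₑᵒ(G ∘ H) ≤ ρₑᵒ(G)·α(H) + ρₑᵒ(H)·(α(G) − ρₑᵒ(G))`. -/
theorem stmt_7 {V W : Type*} [Fintype V] [Fintype W]
    (G : SimpleGraph V) (H : SimpleGraph W) :
    eopNum G * _root_.indepNum H ≤ eopNum (lexProd G H) ∧
    eopNum (lexProd G H) ≤ eopNum G * _root_.indepNum H + eopNum H * (_root_.indepNum G - eopNum G) := by
  exact ⟨eopNum_mul_indepNum_le_eopNum_lexProd G H, eopNum_lexProd_le G H⟩
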